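/- Let d ≥ 1, let ε ∈ (0,1), set m = ⌊1/(d·ε)⌋, and assume m ≥ 2. Let P = {1,…,m}^d ⊆ ℝ^d be the integer grid. Then any set Π of linear orders on P such that for every pair of distinct points p, q ∈ P some σ ∈ Π is ε-local for p and q must satisfy |Π| ≥ m^d / 2. -/

import Mathlib

open Metric Set

/-- Points of `ℝ^d` with the Euclidean norm. -/
abbrev Pt (d : ℕ) : Type := EuclideanSpace ℝ (Fin d)

/-- The half-open unit cube `[0,1)^d`. -/
def unitCube (d : ℕ) : Set (Pt d) := {x | ∀ i, 0 ≤ x i ∧ x i < 1}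

/-- A linear order defined on a subset `dom` of `X`, given by its strict
relation `lt`: irreflexive, transitive and total on `dom`. -/
structure LinOrderOn (X : Type*) where
  dom : Set X
  lt : X → X → Prop
  irrefl : ∀ x ∈ dom, ¬ lt x x
  trans : ∀ x ∈ dom, ∀ y ∈ dom, ∀ z ∈ dom, lt x y → lt y z → lt x z
  total : ∀ x ∈ dom, ∀ y ∈ dom, x ≠ y → lt x y ∨ lt y x

/-- `σ` is `ε`-local for the (ordered) pair `p ≺_σ q`: every point of the
domain strictly between `p` and `q` in `σ` is `ε·‖p−q‖`-close to `p` or `q`. -/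
def EpsLocal (d : ℕ) (σ : LinOrderOn (Pt d)) (ε : ℝ) (p q : Pt d) : Prop :=
  σ.lt p q ∧
  ∀ u ∈ σ.dom, σ.lt p u → σ.lt u q →
    dist u p ≤ ε * dist p q ∨ dist u q ≤ ε * dist p q

lemma exists_max_rel {α : Type*} (r : α → α → Prop) :
    ∀ s : Finset α, s.Nonempty →
    (∀ x ∈ s, ¬ r x x) →
    (∀ x ∈ s, ∀ y ∈ s, ∀ z ∈ s, r x y → r y z → r x z) →
    ∃ a ∈ s, ∀ b ∈ s, ¬ r a b := by
  intro s
  induction s using Finset.cons_induction with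
  | empty => simp
  | cons x t hx ih =>
    intro _ hirr htr
    rcases t.eq_empty_or_nonempty with rfl | ht
    · exact ⟨x, by simp, by simpa using hirr x (by simp)⟩
    · obtain ⟨a, hat, ha⟩ := ih ht
        (fun y hy => hirr y (Finset.mem_cons_of_mem hy))
        (fun a ha' b hb c hc => htr a (Finset.mem_cons_of_mem ha')
          b (Finset.mem_cons_of_mem hb) c (Finset.mem_cons_of_mem hc))
      by_cases hax : r a x
      · refine ⟨x, Finset.mem_cons_self .., ?_⟩
        intro b hb hrb
        rcases Finset.mem_cons.mp hb with rfl | hb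
        · exact hirr b (Finset.mem_cons_self ..) hrb
        · exact ha b hb (htr a (Finset.mem_cons_of_mem hat) x (Finset.mem_cons_self ..)
            b (Finset.mem_cons_of_mem hb) hax hrb)
      · refine ⟨a, Finset.mem_cons_of_mem hat, ?_⟩
        intro b hb hrb
        rcases Finset.mem_cons.mp hb with rfl | hb
        · exact hax hrb
        · exact ha b hb hrb

lemma coord_dist_le {d : ℕ} (x y : Pt d) (i : Fin d) : dist (x i) (y i) ≤ dist x y := by
  rw [EuclideanSpace.dist_eq]
  have h : dist (x i) (y i) ^ 2 ≤ ∑ j, dist (x j) (y j) ^ 2 :=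
    Finset.single_le_sum (f := fun j => dist (x j) (y j) ^ 2)
      (fun j _ => sq_nonneg _) (Finset.mem_univ i)
  calc dist (x i) (y i) = Real.sqrt (dist (x i) (y i) ^ 2) := (Real.sqrt_sq dist_nonneg).symm
    _ ≤ _ := Real.sqrt_le_sqrt h

noncomputable def eGrid (d m : ℕ) (a : Fin d → Fin m) : Pt d :=
  (WithLp.equiv 2 (Fin d → ℝ)).symm (fun i => ((a i : ℕ) : ℝ) + 1)

lemma eGrid_apply {d m : ℕ} (a : Fin d → Fin m) (i : Fin d) :
    eGrid d m a i = ((a i : ℕ) : ℝ) + 1 := rfl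

lemma eGrid_inj {d m : ℕ} : Function.Injective (eGrid d m) := by
  intro a b h
  funext i
  have h2 : ((a i : ℕ) : ℝ) + 1 = ((b i : ℕ) : ℝ) + 1 := by
    have := congrArg (fun x : Pt d => x i) h
    simpa [eGrid_apply] using this
  have h3 : ((a i : ℕ) : ℝ) = ((b i : ℕ) : ℝ) := by linarith
  exact Fin.ext (by exact_mod_cast h3)

/-- `p` and `q` are adjacent in `σ`: `p ≺ q` with nothing in between. -/
def Adj (d : ℕ) (σ : LinOrderOn (Pt d)) (p q : Pt d) : Prop :=
  σ.lt p q ∧ ∀ u ∈ σ.dom, ¬ (σ.lt p u ∧ σ.lt u q)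

theorem stmt_14 (d : ℕ) (hd : 1 ≤ d) (ε : ℝ) (hε : 0 < ε) (hε1 : ε < 1)
    (m : ℕ) (hm : m = ⌊1 / ((d : ℝ) * ε)⌋₊) (hm2 : 2 ≤ m)
    (P : Set (Pt d)) (hP : P = {x : Pt d | ∀ i, ∃ k : ℕ, 1 ≤ k ∧ k ≤ m ∧ x i = (k : ℝ)})
    (Ors : Set (LinOrderOn (Pt d))) (hdom : ∀ σ ∈ Ors, σ.dom = P)
    (hloc : ∀ p ∈ P, ∀ q ∈ P, p ≠ q →
      ∃ σ ∈ Ors, EpsLocal d σ ε p q ∨ EpsLocal d σ ε q p) :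
    ((m : ℝ) ^ d / 2 ≤ (Ors.ncard : ℝ)) ∨ Ors.Infinite := by
  classical
  rcases Set.finite_or_infinite Ors with hOF | hInf
  swap
  · exact Or.inr hInf
  left
  have hd1 : (1 : ℝ) ≤ (d : ℝ) := by exact_mod_cast hd
  have hdε : (0 : ℝ) < (d : ℝ) * ε := by positivity
  have hmle : (m : ℝ) ≤ 1 / ((d : ℝ) * ε) := by
    rw [hm]; exact Nat.floor_le (by positivity)
  have hm1 : (1 : ℝ) ≤ (m : ℝ) := by exact_mod_cast (by omega : 1 ≤ m)
  -- upper bound on scaled distances within the grid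
  have hGup : ∀ p ∈ P, ∀ q ∈ P, ε * dist p q < 1 := by
    intro p hp q hq
    rw [hP] at hp hq
    have hsq : dist p q ^ 2 = ∑ i, dist (p i) (q i) ^ 2 := by
      rw [EuclideanSpace.dist_eq, Real.sq_sqrt]
      positivity
    have hcoord : ∀ i, dist (p i) (q i) ^ 2 ≤ ((m : ℝ) - 1) ^ 2 := by
      intro i
      obtain ⟨kp, hkp1, hkpm, hkpe⟩ := hp i
      obtain ⟨kq, hkq1, hkqm, hkqe⟩ := hq i
      have ha : (kp : ℝ) ≤ m := by exact_mod_cast hkpm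
      have hb : (kq : ℝ) ≤ m := by exact_mod_cast hkqm
      have hc : (1 : ℝ) ≤ kp := by exact_mod_cast hkp1
      have hd' : (1 : ℝ) ≤ kq := by exact_mod_cast hkq1
      have h1 : |(kp : ℝ) - (kq : ℝ)| ≤ (m : ℝ) - 1 := by
        rw [abs_sub_le_iff]; constructor <;> linarith
      rw [Real.dist_eq, hkpe, hkqe]
      exact pow_le_pow_left₀ (abs_nonneg _) h1 2
    have hsum : dist p q ^ 2 ≤ (d : ℝ) * ((m : ℝ) - 1) ^ 2 := by
      rw [hsq]
      calc ∑ i, dist (p i) (q i) ^ 2 ≤ ∑ _i : Fin d, ((m : ℝ) - 1) ^ 2 :=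
            Finset.sum_le_sum (fun i _ => hcoord i)
        _ = (d : ℝ) * ((m : ℝ) - 1) ^ 2 := by simp [mul_comm]
    have hmd : (m : ℝ) * ((d : ℝ) * ε) ≤ 1 := by
      rw [← le_div_iff₀ hdε]; exact hmle
    have h2 : (d : ℝ) * ε * ((m : ℝ) - 1) < 1 := by nlinarith
    have h3 : ε * ((m : ℝ) - 1) < 1 := by nlinarith
    have hlt : (d : ℝ) * ((m : ℝ) - 1) ^ 2 < (1 / ε) ^ 2 := by
      have ha0 : 0 ≤ (d : ℝ) * ε * ((m : ℝ) - 1) := by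
        apply mul_nonneg (by positivity); linarith
      have key : (d : ℝ) * ε * ((m : ℝ) - 1) * (ε * ((m : ℝ) - 1)) < 1 :=
        lt_of_le_of_lt (mul_le_of_le_one_right ha0 (le_of_lt h3)) h2
      rw [div_pow, one_pow, lt_div_iff₀ (by positivity : (0:ℝ) < ε ^ 2)]
      nlinarith [key]
    have hdlt : dist p q < 1 / ε :=
      lt_of_pow_lt_pow_left₀ 2 (by positivity) (lt_of_le_of_lt hsum hlt)
    calc ε * dist p q < ε * (1 / ε) := mul_lt_mul_of_pos_left hdlt hε
      _ = 1 := by field_simp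
  -- lower bound: distinct grid points are at distance ≥ 1
  have hGlow : ∀ p ∈ P, ∀ q ∈ P, p ≠ q → (1 : ℝ) ≤ dist p q := by
    intro p hp q hq hne
    rw [hP] at hp hq
    have hex : ∃ i, p i ≠ q i := by
      by_contra h
      push_neg at h
      exact hne (PiLp.ext h)
    obtain ⟨i, hi⟩ := hex
    obtain ⟨kp, hkp1, hkpm, hkpe⟩ := hp i
    obtain ⟨kq, hkq1, hkqm, hkqe⟩ := hq i
    have hk : kp ≠ kq := by
      intro h; exact hi (by rw [hkpe, hkqe, h])
    have h1 : (1 : ℝ) ≤ |(kp : ℝ) - (kq : ℝ)| := by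
      have hz : (1 : ℤ) ≤ |(kp : ℤ) - (kq : ℤ)| :=
        Int.one_le_abs (sub_ne_zero.mpr (by exact_mod_cast hk))
      exact_mod_cast hz
    calc (1 : ℝ) ≤ |(kp : ℝ) - (kq : ℝ)| := h1
      _ = dist (p i) (q i) := by rw [Real.dist_eq, hkpe, hkqe]
      _ ≤ dist p q := coord_dist_le p q i
  -- ε-locality forces adjacency
  have hAdj : ∀ σ ∈ Ors, ∀ p ∈ P, ∀ q ∈ P, EpsLocal d σ ε p q → Adj d σ p q := by
    intro σ hσ p hp q hq hl
    refine ⟨hl.1, ?_⟩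
    rintro u hu ⟨h1, h2⟩
    have hdomσ := hdom σ hσ
    have huP : u ∈ P := by rw [← hdomσ]; exact hu
    have hup : u ≠ p := by
      rintro rfl
      exact σ.irrefl u (by rw [hdomσ]; exact hp) h1
    have huq : u ≠ q := by
      rintro rfl
      exact σ.irrefl u (by rw [hdomσ]; exact hq) h2
    have hl1 := hGlow u huP p hp hup
    have hl2 := hGlow u huP q hq huq
    have h3 := hGup p hp q hq
    rcases hl.2 u hu h1 h2 with h | h <;> linarith
  -- the grid is finite of cardinality m^d
  have hPr : P = Set.range (eGrid d m) := by
    rw [hP]; ext x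
    constructor
    · intro hx
      choose k hk1 hkm hke using hx
      refine ⟨fun i => ⟨k i - 1, by have := hkm i; have := hk1 i; omega⟩, ?_⟩
      refine PiLp.ext (fun i => ?_)
      rw [eGrid_apply]
      simp only []
      rw [hke i]
      have : ((k i - 1 : ℕ) : ℝ) = (k i : ℝ) - 1 := by
        have := hk1 i
        push_cast [Nat.cast_sub this]
        ring
      rw [this]; ring
    · rintro ⟨a, rfl⟩ i
      refine ⟨(a i : ℕ) + 1, by omega, by have := (a i).isLt; omega, ?_⟩
      rw [eGrid_apply]; push_cast; ring
  have hPfin : P.Finite := hPr ▸ Set.finite_range _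
  set PF := hPfin.toFinset with hPFdef
  have hmemPF : ∀ x, x ∈ PF ↔ x ∈ P := fun x => hPfin.mem_toFinset
  have hcard : PF.card = m ^ d := by
    have himg : PF = Finset.univ.image (eGrid d m) := by
      ext x
      simp [hPFdef, Set.Finite.mem_toFinset, hPr, Set.mem_range, eq_comm]
    rw [himg, Finset.card_image_of_injective _ eGrid_inj, Finset.card_univ]
    simp [Fintype.card_fun]
  set N := PF.card with hNdef
  have hN2 : 2 ≤ N := by
    rw [hcard]
    calc 2 ≤ m := hm2
      _ ≤ m ^ d := Nat.le_self_pow (by omega) m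
  set OF := hOF.toFinset with hOFdef
  set A1 : LinOrderOn (Pt d) → Finset (Pt d × Pt d) :=
    fun σ => (PF ×ˢ PF).filter fun pq => Adj d σ pq.1 pq.2 with hA1def
  set AF : LinOrderOn (Pt d) → Finset (Pt d × Pt d) :=
    fun σ => (PF ×ˢ PF).filter fun pq => Adj d σ pq.1 pq.2 ∨ Adj d σ pq.2 pq.1 with hAFdef
  set E : Finset (Pt d × Pt d) := (PF ×ˢ PF).filter fun pq => ¬ pq.1 = pq.2 with hEdef
  -- each A1 σ has at most N - 1 elements
  have hA1card : ∀ σ ∈ Ors, (A1 σ).card ≤ N - 1 := by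
    intro σ hσ
    have hdomσ := hdom σ hσ
    have hmemdom : ∀ x ∈ PF, x ∈ σ.dom := by
      intro x hx; rw [hdomσ]; exact (hmemPF x).mp hx
    have hPFne : PF.Nonempty := by
      have hpos : 0 < N := by rw [hcard]; exact Nat.pow_pos (by omega)
      exact Finset.card_pos.mp hpos
    obtain ⟨top, htopPF, htop⟩ := exists_max_rel σ.lt PF hPFne
      (fun x hx => σ.irrefl x (hmemdom x hx))
      (fun x hx y hy z hz => σ.trans x (hmemdom x hx) y (hmemdom y hy) z (hmemdom z hz))
    have hmaps : ∀ pq ∈ A1 σ, pq.1 ∈ PF.erase top := by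
      intro pq hpq
      rw [hA1def, Finset.mem_filter, Finset.mem_product] at hpq
      refine Finset.mem_erase.mpr ⟨?_, hpq.1.1⟩
      intro heq
      exact htop pq.2 hpq.1.2 (heq ▸ hpq.2.1)
    have hinj : Set.InjOn (fun pq : Pt d × Pt d => pq.1) (A1 σ) := by
      intro pq hpq pq' hpq' heq
      rw [Finset.mem_coe, hA1def, Finset.mem_filter, Finset.mem_product] at hpq hpq'
      have heq' : pq.1 = pq'.1 := heq
      have hq2 : pq.2 = pq'.2 := by
        by_contra hne
        rcases σ.total pq.2 (hmemdom _ hpq.1.2) pq'.2 (hmemdom _ hpq'.1.2) hne with h | h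
        · exact hpq'.2.2 pq.2 (hmemdom _ hpq.1.2) ⟨by rw [← heq']; exact hpq.2.1, h⟩
        · exact hpq.2.2 pq'.2 (hmemdom _ hpq'.1.2) ⟨by rw [heq']; exact hpq'.2.1, h⟩
      exact Prod.ext heq' hq2
    calc (A1 σ).card ≤ (PF.erase top).card := Finset.card_le_card_of_injOn _ hmaps hinj
      _ = N - 1 := by rw [Finset.card_erase_of_mem htopPF]
  -- each AF σ has at most 2(N-1) elements
  have hAFcard : ∀ σ ∈ Ors, (AF σ).card ≤ 2 * (N - 1) := by
    intro σ hσ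
    have hsub : AF σ ⊆ A1 σ ∪ (A1 σ).image Prod.swap := by
      intro pq hpq
      rw [hAFdef, Finset.mem_filter, Finset.mem_product] at hpq
      rcases hpq.2 with h | h
      · exact Finset.mem_union_left _ (by
          rw [hA1def, Finset.mem_filter, Finset.mem_product]
          exact ⟨hpq.1, h⟩)
      · refine Finset.mem_union_right _ (Finset.mem_image.mpr ⟨(pq.2, pq.1), ?_, ?_⟩)
        · rw [hA1def, Finset.mem_filter, Finset.mem_product]
          exact ⟨⟨hpq.1.2, hpq.1.1⟩, h⟩
        · simp
    calc (AF σ).card ≤ (A1 σ ∪ (A1 σ).image Prod.swap).card := Finset.card_le_card hsub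
      _ ≤ (A1 σ).card + ((A1 σ).image Prod.swap).card := Finset.card_union_le _ _
      _ ≤ (A1 σ).card + (A1 σ).card := by
          have := Finset.card_image_le (s := A1 σ) (f := Prod.swap)
          omega
      _ ≤ 2 * (N - 1) := by have := hA1card σ hσ; omega
  -- E is covered by the AF σ
  have hEsub : E ⊆ OF.biUnion AF := by
    intro pq hpq
    rw [hEdef, Finset.mem_filter, Finset.mem_product] at hpq
    have hp1 : pq.1 ∈ P := (hmemPF _).mp hpq.1.1
    have hp2 : pq.2 ∈ P := (hmemPF _).mp hpq.1.2
    obtain ⟨σ, hσ, hcase⟩ := hloc pq.1 hp1 pq.2 hp2 hpq.2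
    refine Finset.mem_biUnion.mpr ⟨σ, hOF.mem_toFinset.mpr hσ, ?_⟩
    rw [hAFdef, Finset.mem_filter, Finset.mem_product]
    refine ⟨hpq.1, ?_⟩
    rcases hcase with h | h
    · exact Or.inl (hAdj σ hσ _ hp1 _ hp2 h)
    · exact Or.inr (hAdj σ hσ _ hp2 _ hp1 h)
  -- cardinality of E
  have hEcard : E.card + N = N * N := by
    have hdiag : (PF ×ˢ PF).filter (fun pq => pq.1 = pq.2) = PF.image (fun p => (p, p)) := by
      ext pq
      simp only [Finset.mem_filter, Finset.mem_product, Finset.mem_image]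
      constructor
      · rintro ⟨⟨h1, h2⟩, h3⟩
        exact ⟨pq.1, h1, Prod.ext rfl h3⟩
      · rintro ⟨a, ha, rfl⟩
        exact ⟨⟨ha, ha⟩, rfl⟩
    have hsplit := Finset.card_filter_add_card_filter_not
      (s := PF ×ˢ PF) (p := fun pq => pq.1 = pq.2)
    have hdc : ((PF ×ˢ PF).filter (fun pq => pq.1 = pq.2)).card = N := by
      rw [hdiag, Finset.card_image_of_injective]
      intro a b h
      simpa using h
    have hpc : (PF ×ˢ PF).card = N * N := by rw [Finset.card_product]
    rw [hEdef]
    omega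
  -- put everything together
  have hsum : E.card ≤ OF.card * (2 * (N - 1)) := by
    calc E.card ≤ (OF.biUnion AF).card := Finset.card_le_card hEsub
      _ ≤ ∑ σ ∈ OF, (AF σ).card := Finset.card_biUnion_le
      _ ≤ OF.card * (2 * (N - 1)) := by
          have := Finset.sum_le_card_nsmul OF (fun σ => (AF σ).card) (2 * (N - 1))
            (fun σ hσ => hAFcard σ (hOF.mem_toFinset.mp hσ))
          simpa using this
  have hOcard : Ors.ncard = OF.card := Set.ncard_eq_toFinset_card Ors hOF
  -- real arithmetic finish
  have hNR : ((N : ℕ) : ℝ) = (m : ℝ) ^ d := by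
    rw [hcard]; push_cast; ring
  have hcast : ((N : ℕ) : ℝ) * N ≤ (OF.card : ℝ) * (2 * ((N : ℝ) - 1)) + N := by
    have h1 : N * N ≤ OF.card * (2 * (N - 1)) + N := by omega
    have h2 : ((N - 1 : ℕ) : ℝ) = (N : ℝ) - 1 := by
      push_cast [Nat.cast_sub (by omega : 1 ≤ N)]; ring
    calc ((N : ℕ) : ℝ) * N = ((N * N : ℕ) : ℝ) := by push_cast; ring
      _ ≤ ((OF.card * (2 * (N - 1)) + N : ℕ) : ℝ) := by exact_mod_cast h1
      _ = (OF.card : ℝ) * (2 * ((N : ℝ) - 1)) + N := by push_cast [h2]; ring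
  have hN2R : (2 : ℝ) ≤ (N : ℝ) := by exact_mod_cast hN2
  have hfinal : ((N : ℕ) : ℝ) / 2 ≤ (OF.card : ℝ) := by nlinarith
  rw [hOcard]
  rw [← hNR]
  exact hfinal
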